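/- Let O = {Aᵢ ⊓ Aⱼ ⊑ B : 1 ≤ i < j ≤ 3}, Σ = {A₁, A₂, A₃, B, r}, q = ∃x B(x), and D = {r(a₁,a₂), r(a₂,a₃), r(a₃,a₁), A₁(a₁), A₂(a₂), A₃(a₃)}. Then () ∈ app↑_{F₁}(Q, D) but () is not a certain answer to Q = (O, Σ, q) on D. That is: (1) for every database D' obtained from D by a homomorphism (equivalently, by identifying constants) such that D' has treewidth (1,2), the certain answer () to Q on D' holds; and (2) there is a model of O and D in which no element satisfies B. -/

import Mathlib

set_option autoImplicit false

attribute [local instance] Classical.propDecidable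

/-! ### Interpretations, databases, homomorphisms -/

structure Interp (C R A : Type) where
  cn : C → A → Prop
  rn : R → A → A → Prop

namespace Interp

variable {C R A : Type}

/-- The active domain of an interpretation/database. -/
def adom (I : Interp C R A) : Set A :=
  {a | (∃ c, I.cn c a) ∨ (∃ r b, I.rn r a b) ∨ (∃ r b, I.rn r b a)}

/-- An interpretation has finitely many facts (this is what makes it a database). -/
def FiniteFacts (I : Interp C R A) : Prop :=
  {p : C × A | I.cn p.1 p.2}.Finite ∧ {t : R × A × A | I.rn t.1 t.2.1 t.2.2}.Finite

/-- All facts use only symbols from the signature `(SC, SR)`. -/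
def InSig (I : Interp C R A) (SC : Set C) (SR : Set R) : Prop :=
  (∀ c a, I.cn c a → c ∈ SC) ∧ (∀ r a b, I.rn r a b → r ∈ SR)

/-- Restriction of an interpretation to a set of elements. -/
def restrict (I : Interp C R A) (s : Set A) : Interp C R A where
  cn c a := a ∈ s ∧ I.cn c a
  rn r a b := a ∈ s ∧ b ∈ s ∧ I.rn r a b

/-- Semantics of (possibly inverse) roles: `Sum.inl r` is `r`, `Sum.inr r` is `r⁻`. -/
def roleE (I : Interp C R A) : R ⊕ R → A → A → Prop
  | .inl r, a, b => I.rn r a b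
  | .inr r, a, b => I.rn r b a

/-- The undirected graph underlying an interpretation. -/
def graphOf (I : Interp C R A) : SimpleGraph A where
  Adj a b := a ≠ b ∧ ∃ r, I.rn r a b ∨ I.rn r b a
  symm := ⟨by rintro a b ⟨hne, r, hr⟩; exact ⟨hne.symm, r, hr.symm⟩⟩
  loopless := ⟨by rintro a ⟨hne, -⟩; exact hne rfl⟩

/-- A database/interpretation is a tree: the underlying graph is acyclic,
there are no self loops and no multi-edges (trees need not be connected). -/
def IsTree (I : Interp C R A) : Prop :=
  I.graphOf.IsAcyclic ∧ (∀ r a, ¬ I.rn r a a) ∧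
    (∀ (ρ₁ ρ₂ : R ⊕ R) (a b : A), ρ₁ ≠ ρ₂ → I.roleE ρ₁ a b → ¬ I.roleE ρ₂ a b)

end Interp

/-- Homomorphisms between interpretations. -/
structure Hom {C R A B : Type} (I : Interp C R A) (J : Interp C R B) where
  toFun : A → B
  map_cn : ∀ c a, I.cn c a → J.cn c (toFun a)
  map_rn : ∀ r a b, I.rn r a b → J.rn r (toFun a) (toFun b)

/-! ### Tree decompositions and treewidth -/

/-- An `(ℓ,k)`-tree decomposition of an interpretation: an undirected tree `(V,G)`
with bags of size at most `k`, pairwise overlaps of size at most `ℓ`, every active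
element appearing in a nonempty connected set of bags, and every role edge
contained in some bag. -/
structure TreeDecomp {C R A : Type} (I : Interp C R A) (ℓ k : ℕ) where
  V : Type
  G : SimpleGraph V
  conn : G.Connected
  acyc : G.IsAcyclic
  bag : V → Set A
  cover : ∀ a ∈ I.adom, (G.induce {v | a ∈ bag v}).Connected
  edges : ∀ r a b, I.rn r a b → ∃ v, a ∈ bag v ∧ b ∈ bag v
  bagFin : ∀ v, (bag v).Finite
  bagCard : ∀ v, (bag v).ncard ≤ k
  overlap : ∀ v w, v ≠ w → (bag v ∩ bag w).ncard ≤ ℓ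

/-- `I` has treewidth `(ℓ,k)`. -/
def HasTW {C R A : Type} (I : Interp C R A) (ℓ k : ℕ) : Prop :=
  Nonempty (TreeDecomp I ℓ k)

/-! ### Conjunctive queries and UCQs -/

/-- A conjunctive query with `m` answer variables (`Fin m`) and quantified
variables `V`. -/
structure CQ (C R : Type) (m : ℕ) where
  V : Type
  cnAtoms : Set (C × (Fin m ⊕ V))
  rnAtoms : Set (R × (Fin m ⊕ V) × (Fin m ⊕ V))

namespace CQ

variable {C R A : Type} {m : ℕ}

/-- `I ⊨ q(atup)`. -/
def Eval (q : CQ C R m) (I : Interp C R A) (atup : Fin m → A) : Prop :=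
  ∃ h : Fin m ⊕ q.V → A, (∀ i, h (.inl i) = atup i) ∧
    (∀ p ∈ q.cnAtoms, I.cn p.1 (h p.2)) ∧
    (∀ t ∈ q.rnAtoms, I.rn t.1 (h t.2.1) (h t.2.2))

/-- The canonical database of a CQ (all variables as constants). -/
def canon (q : CQ C R m) : Interp C R (Fin m ⊕ q.V) where
  cn c x := (c, x) ∈ q.cnAtoms
  rn r x y := (r, x, y) ∈ q.rnAtoms

/-- The treewidth of a CQ: the treewidth of its canonical database restricted to
the quantified variables (answer variables do not contribute). -/
def HasTWq (q : CQ C R m) (ℓ k : ℕ) : Prop :=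
  HasTW (q.canon.restrict (Set.range Sum.inr)) ℓ k

end CQ

/-- A union of conjunctive queries, as an indexed family of CQs of the same arity. -/
structure UCQ (C R : Type) (m : ℕ) where
  ι : Type
  d : ι → CQ C R m

def UCQ.Eval {C R A : Type} {m : ℕ} (q : UCQ C R m) (I : Interp C R A)
    (atup : Fin m → A) : Prop :=
  ∃ i, (q.d i).Eval I atup

/-! ### Certain answers (generic in the ontology semantics) -/

/-- `atup` is a certain answer on `D` for query semantics `Ev`, w.r.t. all
(nonempty) models satisfying `Mod`: under the standard-names-free reading,
models of `D` are interpretations together with a homomorphism from `D`. -/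
def Certain {C R A : Type} {m : ℕ} (Mod : ∀ Δ : Type, Interp C R Δ → Prop)
    (D : Interp C R A) (Ev : ∀ Δ : Type, Interp C R Δ → (Fin m → Δ) → Prop)
    (atup : Fin m → A) : Prop :=
  ∀ (Δ : Type), Nonempty Δ → ∀ I : Interp C R Δ, Mod Δ I →
    ∀ h : Hom D I, Ev Δ I (fun i => h.toFun (atup i))

/-- `D` is satisfiable w.r.t. the class of models described by `Mod`. -/
def Satisfiable {C R A : Type} (Mod : ∀ Δ : Type, Interp C R Δ → Prop)
    (D : Interp C R A) : Prop :=
  ∃ (Δ : Type) (_ : Nonempty Δ) (I : Interp C R Δ), Nonempty (Hom D I) ∧ Mod Δ I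

/-! ### First-order logic (no equality, no constants) -/

inductive FO (C R : Type) : ℕ → Type
  | cn {n : ℕ} (c : C) (i : Fin n) : FO C R n
  | rn {n : ℕ} (r : R) (i j : Fin n) : FO C R n
  | fls {n : ℕ} : FO C R n
  | imp {n : ℕ} (φ ψ : FO C R n) : FO C R n
  | all {n : ℕ} (φ : FO C R (n+1)) : FO C R n

def FO.Eval {C R A : Type} (I : Interp C R A) : {n : ℕ} → FO C R n → (Fin n → A) → Prop
  | _, .cn c i, v => I.cn c (v i)
  | _, .rn r i j, v => I.rn r (v i) (v j)
  | _, .fls, _ => False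
  | _, .imp φ ψ, v => φ.Eval I v → ψ.Eval I v
  | _, .all φ, v => ∀ a, φ.Eval I (Fin.cons a v)

/-- `I` is a model of the FO ontology `O`. -/
def ModelsFO {C R A : Type} (I : Interp C R A) (O : Set (FO C R 0)) : Prop :=
  ∀ φ ∈ O, φ.Eval I (fun i => i.elim0)

/-- `O ⊨ O'` for FO ontologies. -/
def FOEntails {C R : Type} (O O' : Set (FO C R 0)) : Prop :=
  ∀ (Δ : Type), Nonempty Δ → ∀ I : Interp C R Δ, ModelsFO I O → ModelsFO I O'

/-! ### Tuple-generating dependencies -/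

/-- A TGD with `n` frontier variables, whose body and head are CQs with the
frontier variables as answer variables; `head = none` stands for `⊥`. -/
structure TGD (C R : Type) where
  n : ℕ
  body : CQ C R n
  head : Option (CQ C R n)

def TGD.Sat {C R A : Type} (t : TGD C R) (I : Interp C R A) : Prop :=
  ∀ v : Fin t.n → A, t.body.Eval I v →
    match t.head with
    | some ψ => ψ.Eval I v
    | none => False

def ModelsTGDSet {C R A : Type} (I : Interp C R A) (O : Set (TGD C R)) : Prop :=
  ∀ t ∈ O, t.Sat I

/-! ### Description logic concepts -/

/-- `ELIU` concepts with ⊥, possibly disjunction and the universal role. -/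
inductive ELIU (C R : Type) : Type
  | top
  | bot
  | cn (c : C)
  | inter (X Y : ELIU C R)
  | union (X Y : ELIU C R)
  | exR (ρ : R ⊕ R) (X : ELIU C R)
  | exU (X : ELIU C R)

namespace ELIU

variable {C R A : Type}

def sem (I : Interp C R A) : ELIU C R → A → Prop
  | .top, _ => True
  | .bot, _ => False
  | .cn c, a => I.cn c a
  | .inter X Y, a => X.sem I a ∧ Y.sem I a
  | .union X Y, a => X.sem I a ∨ Y.sem I a
  | .exR ρ X, a => ∃ b, I.roleE ρ a b ∧ X.sem I b
  | .exU X, _ => ∃ b, X.sem I b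

def uFree : ELIU C R → Prop
  | .top => True
  | .bot => True
  | .cn _ => True
  | .inter X Y => X.uFree ∧ Y.uFree
  | .union X Y => X.uFree ∧ Y.uFree
  | .exR _ X => X.uFree
  | .exU _ => False

def disjFree : ELIU C R → Prop
  | .top => True
  | .bot => True
  | .cn _ => True
  | .inter X Y => X.disjFree ∧ Y.disjFree
  | .union _ _ => False
  | .exR _ X => X.disjFree
  | .exU X => X.disjFree

def botFree : ELIU C R → Prop
  | .top => True
  | .bot => False
  | .cn _ => True
  | .inter X Y => X.botFree ∧ Y.botFree
  | .union X Y => X.botFree ∧ Y.botFree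
  | .exR _ X => X.botFree
  | .exU X => X.botFree

end ELIU

/-- A concept inclusion is an `ELI_⊥` CI (no disjunction, no universal role). -/
def ELIbotCI {C R : Type} (p : ELIU C R × ELIU C R) : Prop :=
  p.1.disjFree ∧ p.1.uFree ∧ p.2.disjFree ∧ p.2.uFree

/-- A concept inclusion is an `ELI` CI. -/
def ELICI {C R : Type} (p : ELIU C R × ELIU C R) : Prop :=
  ELIbotCI p ∧ p.1.botFree ∧ p.2.botFree

def ModelsELIUOnt {C R A : Type} (I : Interp C R A)
    (T : Set (ELIU C R × ELIU C R)) : Prop :=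
  ∀ p ∈ T, ∀ a, p.1.sem I a → p.2.sem I a

def EntailsELIU {C R : Type} (T T' : Set (ELIU C R × ELIU C R)) : Prop :=
  ∀ (Δ : Type), Nonempty Δ → ∀ I : Interp C R Δ, ModelsELIUOnt I T → ModelsELIUOnt I T'

/-- `ALCI` concepts. -/
inductive ALCI (C R : Type) : Type
  | top
  | cn (c : C)
  | neg (X : ALCI C R)
  | inter (X Y : ALCI C R)
  | exR (ρ : R ⊕ R) (X : ALCI C R)

namespace ALCI

variable {C R A : Type}

def sem (I : Interp C R A) : ALCI C R → A → Prop
  | .top, _ => True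
  | .cn c, a => I.cn c a
  | .neg X, a => ¬ X.sem I a
  | .inter X Y, a => X.sem I a ∧ Y.sem I a
  | .exR ρ X, a => ∃ b, I.roleE ρ a b ∧ X.sem I b

/-- `C ⊔ D` as an abbreviation. -/
def unionA (X Y : ALCI C R) : ALCI C R := .neg (.inter (.neg X) (.neg Y))

/-- `∀r.C` as an abbreviation. -/
def allR (r : R) (X : ALCI C R) : ALCI C R := .neg (.exR (.inl r) (.neg X))

/-- `∃rⁿ.C` (n-fold nesting). -/
def exPow (r : R) : ℕ → ALCI C R → ALCI C R
  | 0, X => X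
  | n+1, X => .exR (.inl r) (exPow r n X)

end ALCI

def ModelsALCIOnt {C R A : Type} (I : Interp C R A)
    (O : Set (ALCI C R × ALCI C R)) : Prop :=
  ∀ p ∈ O, ∀ a, p.1.sem I a → p.2.sem I a

def EntailsALCI {C R : Type} (O O' : Set (ALCI C R × ALCI C R)) : Prop :=
  ∀ (Δ : Type), Nonempty Δ → ∀ I : Interp C R Δ, ModelsALCIOnt I O → ModelsALCIOnt I O'

/-- The set `O≈` of all `ELI^u_⊥` concept inclusions entailed by the ALCI
ontology `O`. -/
def ELIuApprox {C R : Type} (O : Set (ALCI C R × ALCI C R)) :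
    Set (ELIU C R × ELIU C R) :=
  {p | p.1.disjFree ∧ p.2.disjFree ∧
    ∀ (Δ : Type), Nonempty Δ → ∀ I : Interp C R Δ, ModelsALCIOnt I O →
      ∀ a, p.1.sem I a → p.2.sem I a}

/-! ### bELIQs -/

/-- A bELIQ: either an ELIQ `C(x)` (unary) or a Boolean ELIQ `∃u.C`. -/
inductive BELIQ (C R : Type) : Type
  | q1 (X : ELIU C R)
  | q0 (X : ELIU C R)

namespace BELIQ

variable {C R A : Type}

def arity : BELIQ C R → ℕ
  | .q1 _ => 1
  | .q0 _ => 0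

/-- Well-formedness: the underlying concept is an `ELI` concept. -/
def wf : BELIQ C R → Prop
  | .q1 X => X.disjFree ∧ X.uFree ∧ X.botFree
  | .q0 X => X.disjFree ∧ X.uFree ∧ X.botFree

def Eval : (q : BELIQ C R) → Interp C R A → (Fin q.arity → A) → Prop
  | .q1 X, I, v => X.sem I (v ⟨0, Nat.zero_lt_one⟩)
  | .q0 X, I, _ => ∃ a, X.sem I a

end BELIQ

/-! ### Tree unraveling -/

/-- Paths in a database, indexed by their tail. -/
inductive UPath {C R A : Type} (I : Interp C R A) : A → Type
  | nil (a : A) : UPath I a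
  | cons {a : A} (p : UPath I a) (ρ : R ⊕ R) (b : A) (h : I.roleE ρ a b) : UPath I b

/-- The tree unraveling `D≈_S` of `D` at `S`: it contains all facts of `D|_S`,
the facts along paths, and the connecting facts between `S` and paths. -/
def treeUnravel {C R A : Type} (D : Interp C R A) (S : Set A) :
    Interp C R (A ⊕ (Σ a : A, UPath D a)) where
  cn c x :=
    match x with
    | .inl a => a ∈ S ∧ D.cn c a
    | .inr p => D.cn c p.1
  rn r x y :=
    (∃ a b, a ∈ S ∧ b ∈ S ∧ D.rn r a b ∧ x = .inl a ∧ y = .inl b) ∨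
    (∃ (a : A) (p : UPath D a) (b : A) (h : D.roleE (.inl r) a b),
        x = .inr ⟨a, p⟩ ∧ y = .inr ⟨b, p.cons (.inl r) b h⟩) ∨
    (∃ (a : A) (p : UPath D a) (b : A) (h : D.roleE (.inr r) a b),
        y = .inr ⟨a, p⟩ ∧ x = .inr ⟨b, p.cons (.inr r) b h⟩) ∨
    (∃ (a b : A) (p : UPath D b), a ∈ S ∧ D.rn r a b ∧ x = .inl a ∧ y = .inr ⟨b, p⟩) ∨
    (∃ (a b : A) (p : UPath D b), a ∈ S ∧ D.rn r b a ∧ x = .inr ⟨b, p⟩ ∧ y = .inl a)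

/-! ### (ℓ,k)-unraveling -/

/-- Admissibility of a bag `T` in an `(ℓ,k)`-sequence: `S ⊆ T ⊆ adom(D)` and
`|T \ S| ≤ k`. -/
def SeqOk {C R A : Type} (D : Interp C R A) (S : Set A) (k : ℕ) (T : Set A) : Prop :=
  S ⊆ T ∧ T ⊆ D.adom ∧ (T \ S).Finite ∧ (T \ S).ncard ≤ k

/-- `(ℓ,k)`-sequences `S₀,O₀,S₁,…,Sₙ`, indexed by the last bag `Sₙ`. -/
inductive LKSeq {C R A : Type} (D : Interp C R A) (S : Set A) (ℓ k : ℕ) : Set A → Type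
  | first (S₀ : Set A) (h : SeqOk D S k S₀) : LKSeq D S ℓ k S₀
  | step {T : Set A} (v : LKSeq D S ℓ k T) (O T' : Set A)
      (hO : S ⊆ O) (hOT : O ⊆ T ∩ T') (hOf : (O \ S).Finite)
      (hOl : (O \ S).ncard ≤ ℓ) (hT' : SeqOk D S k T') : LKSeq D S ℓ k T'

/-- Elements of the `(ℓ,k)`-unraveling: elements of `S` keep their names
(`Sum.inl`), all other copies are identified by the sequence at which they are
introduced. -/
abbrev LKElem {C R A : Type} (D : Interp C R A) (S : Set A) (ℓ k : ℕ) : Type :=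
  A ⊕ (Σ T : Set A, LKSeq D S ℓ k T × A)

/-- The copy `a_v` of `a` in the bag of the sequence `v`. -/
noncomputable def LKSeq.rep {C R A : Type} {D : Interp C R A} {S : Set A} {ℓ k : ℕ} :
    {T : Set A} → LKSeq D S ℓ k T → A → LKElem D S ℓ k
  | _, .first S₀ h, a =>
      if a ∈ S then Sum.inl a else Sum.inr ⟨S₀, (LKSeq.first S₀ h, a)⟩
  | _, .step v O T' h1 h2 h3 h4 h5, a =>
      if a ∈ S then Sum.inl a
      else if a ∈ O then v.rep a
      else Sum.inr ⟨T', (LKSeq.step v O T' h1 h2 h3 h4 h5, a)⟩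

/-- The `(ℓ,k)`-unraveling `D≈_{S,ℓ,k}` of `D` up to `S`. -/
noncomputable def unravelLK {C R A : Type} (D : Interp C R A) (S : Set A) (ℓ k : ℕ) :
    Interp C R (LKElem D S ℓ k) where
  cn c x := ∃ (T : Set A) (v : LKSeq D S ℓ k T) (a : A),
      a ∈ T ∧ x = v.rep a ∧ D.cn c a
  rn r x y := ∃ (T : Set A) (v : LKSeq D S ℓ k T) (a b : A),
      a ∈ T ∧ b ∈ T ∧ x = v.rep a ∧ y = v.rep b ∧ D.rn r a b

/-- The uncopying map. -/
def uncopyLK {C R A : Type} {D : Interp C R A} {S : Set A} {ℓ k : ℕ} :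
    LKElem D S ℓ k → A
  | .inl a => a
  | .inr x => x.2.2

/-- `x` is a copy of `a` in the `(ℓ,k)`-unraveling. -/
def IsCopyLK {C R A : Type} {D : Interp C R A} {S : Set A} {ℓ k : ℕ}
    (x : LKElem D S ℓ k) (a : A) : Prop :=
  ∃ (T : Set A) (v : LKSeq D S ℓ k T), a ∈ T ∧ x = v.rep a

/-- The frontier-one `ℓ,k,ℓ',k'`-TGDs entailed by the ALCI ontology `O`. -/
def approxTGDs {C R : Type} (O : Set (ALCI C R × ALCI C R)) (ℓ k ℓ' k' : ℕ) :
    Set (TGD C R) :=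
  {t | t.n ≤ 1 ∧ HasTW t.body.canon ℓ k ∧
       (∀ ψ, t.head = some ψ → HasTW ψ.canon ℓ' k') ∧
       ∀ (Δ : Type), Nonempty Δ → ∀ I : Interp C R Δ, ModelsALCIOnt I O → t.Sat I}

/-! ### The disjunct operation f and the approximation set E_O -/

def fDisj {C R : Type} : ELIU C R → Set (ELIU C R)
  | .top => {ELIU.top}
  | .bot => {ELIU.bot}
  | .cn c => {ELIU.cn c}
  | .inter X Y => {Z | ∃ X' ∈ fDisj X, ∃ Y' ∈ fDisj Y, Z = ELIU.inter X' Y'}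
  | .union X Y => fDisj X ∪ fDisj Y
  | .exR ρ X => {Z | ∃ X' ∈ fDisj X, Z = ELIU.exR ρ X'}
  | .exU X => {Z | ∃ X' ∈ fDisj X, Z = ELIU.exU X'}

/-- The rewriting of `O` replacing each `C ⊑ D` by `{C' ⊑ D : C' ∈ f(C)}`. -/
def rewriteO {C R : Type} (O : Set (ELIU C R × ELIU C R)) :
    Set (ELIU C R × ELIU C R) :=
  {p | ∃ q ∈ O, p.2 = q.2 ∧ p.1 ∈ fDisj q.1}

/-- `E_O`: all ontologies obtained by choosing, for each inclusion `C' ⊑ D` of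
the rewriting, one inclusion `C' ⊑ D'` with `D' ∈ f(D)`. -/
def EO {C R : Type} (O : Set (ELIU C R × ELIU C R)) :
    Set (Set (ELIU C R × ELIU C R)) :=
  {Oh | ∃ g : ELIU C R × ELIU C R → ELIU C R,
      (∀ p ∈ rewriteO O, g p ∈ fDisj p.2) ∧
      Oh = {q | ∃ p ∈ rewriteO O, q = (p.1, g p)}}

/-! ### Direct products -/

def prodInterp {C R : Type} {n : ℕ} {A : Fin n → Type}
    (I : ∀ i, Interp C R (A i)) : Interp C R (∀ i, A i) where
  cn c f := ∀ i, (I i).cn c (f i)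
  rn r f g := ∀ i, (I i).rn r (f i) (g i)

/-! ### Concrete databases and queries for specific statements -/

/-- The grid CQ `q_m` of Statement 16, as its canonical database. -/
def gridDB {C R : Type} (m : ℕ) (r : R) (Aname : Fin m × Fin m → C) :
    Interp C R (Fin m × Fin m) where
  cn c p := c = Aname p
  rn ρ p q := ρ = r ∧ Even (p.1.1 + p.2.1) ∧
    ((p.1.1 : ℤ) - (q.1.1 : ℤ)).natAbs + ((p.2.1 : ℤ) - (q.2.1 : ℤ)).natAbs = 1

/-- The 3-cycle database of Statement 19. -/
def cycleDB {C R : Type} (nA : Fin 3 → C) (r : R) : Interp C R (Fin 3) where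
  cn c i := c = nA i
  rn ρ i j := ρ = r ∧ j = i + 1

/-- The ontology `{Aᵢ ⊓ Aⱼ ⊑ B : 1 ≤ i < j ≤ 3}` of Statement 19. -/
def cycleOnt {C R : Type} (nA : Fin 3 → C) (nB : C) : Set (ELIU C R × ELIU C R) :=
  {p | ∃ i j : Fin 3, i < j ∧
    p = (ELIU.inter (ELIU.cn (nA i)) (ELIU.cn (nA j)), ELIU.cn nB)}

/-- The Boolean CQ `∃x B(x)` of Statement 19. -/
def existsB {C R : Type} (nB : C) : CQ C R 0 where
  V := Unit
  cnAtoms := {(nB, Sum.inr ())}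
  rnAtoms := ∅

/-- The ontology `O = {∃r.⊤ ⊓ ∀r.A ⊑ B₁ ⊔ B₂}` of Statement 14. -/
def O14 {C R : Type} (a b1 b2 : C) (r : R) : Set (ALCI C R × ALCI C R) :=
  {(ALCI.inter (ALCI.exR (.inl r) ALCI.top) (ALCI.allR r (ALCI.cn a)),
    ALCI.unionA (ALCI.cn b1) (ALCI.cn b2))}

/-- The ontology `O_n` of Statement 14. -/
def O14n {C R : Type} (a b1 x : C) (r : R) (n : ℕ) : Set (ALCI C R × ALCI C R) :=
  {(ALCI.exR (.inl r) (ALCI.cn a), ALCI.exPow r n (ALCI.cn x)),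
   (ALCI.exR (.inl r) (ALCI.inter (ALCI.cn a) (ALCI.exPow r (n-1) (ALCI.cn x))),
    ALCI.cn b1)}

/-! In a tree, three pairwise intersecting connected sets of vertices share a vertex: it is
the median of the three paths between points of the pairwise intersections. Applied to the
sets of bags containing the corners of a triangle, this yields a bag holding the whole
triangle, which is impossible when bags have at most two elements. So every homomorphic
image of the 3-cycle of treewidth `(1,2)` identifies two of its corners, and that element
carries two distinct `Aᵢ`, hence `B`. The 3-cycle itself, whose three `Aᵢ` are pairwise
disjoint, is a model of the ontology in which `B` is empty. -/

namespace SimpleGraph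

variable {V : Type*} {G : SimpleGraph V}

lemma Walk.IsPath.exists_first_mem {x y : V} {p : G.Walk x y} (hp : p.IsPath) {T : Set V}
    (hy : y ∈ T) :
    ∃ (m : V) (p₁ : G.Walk x m), p₁.IsPath ∧ m ∈ T ∧
      (∀ u ∈ p₁.support, u ∈ T → u = m) ∧ p₁.support ⊆ p.support := by
  induction p with
  | nil => exact ⟨_, .nil, .nil, hy, by simp, by simp⟩
  | @cons a b _ h q ih =>
    by_cases ha : a ∈ T
    · exact ⟨a, .nil, .nil, ha, by simp, by simp⟩
    obtain ⟨hq, ha_q⟩ := (Walk.cons_isPath_iff h q).1 hp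
    obtain ⟨m, p₁, hp₁, hm, hfirst, hsub⟩ := ih hq hy
    refine ⟨m, .cons h p₁, hp₁.cons (fun ha_p₁ => ha_q (hsub ha_p₁)), hm, ?_, ?_⟩
    · rintro u (_ | ⟨_, hu⟩) huT
      exacts [absurd huT ha, hfirst u hu huT]
    · exact List.cons_subset_cons a hsub

lemma IsAcyclic.exists_mem_support_of_isPath (hG : G.IsAcyclic) {x y z : V}
    {p : G.Walk x y} {q : G.Walk y z} {s : G.Walk x z}
    (hp : p.IsPath) (hq : q.IsPath) (hs : s.IsPath) :
    ∃ m, m ∈ p.support ∧ m ∈ q.support ∧ m ∈ s.support := by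
  obtain ⟨m, p₁, hp₁, hmq, hfirst, hsub⟩ := hp.exists_first_mem (T := {v | v ∈ q.support})
    q.start_mem_support
  have hq₂ : (q.dropUntil m hmq).IsPath := hq.dropUntil hmq
  -- `p₁` meets `q` only at its end, so `p₁` followed by the rest of `q` is a path, hence `s`.
  have hpath : (p₁.append (q.dropUntil m hmq)).IsPath := by
    rw [Walk.isPath_def, Walk.support_append]
    refine hp₁.support_nodup.append hq₂.support_nodup.tail fun u hu₁ hu₂ => ?_
    obtain rfl := hfirst u hu₁ (q.support_dropUntil_subset_support hmq (List.mem_of_mem_tail hu₂))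
    have hnodup := hq₂.support_nodup
    rw [← Walk.cons_tail_support] at hnodup
    exact (List.nodup_cons.1 hnodup).1 hu₂
  have hs_eq : s = p₁.append (q.dropUntil m hmq) :=
    congrArg Subtype.val ((hG.subsingleton_path x z).elim ⟨s, hs⟩ ⟨_, hpath⟩)
  refine ⟨m, hsub p₁.end_mem_support, hmq, ?_⟩
  rw [hs_eq]
  exact Walk.mem_support_append_iff _ _ |>.2 (Or.inl p₁.end_mem_support)

lemma Connected.exists_isPath_of_induce {T : Set V} (hT : (G.induce T).Connected)
    {x y : V} (hx : x ∈ T) (hy : y ∈ T) :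
    ∃ p : G.Walk x y, p.IsPath ∧ ∀ u ∈ p.support, u ∈ T := by
  obtain ⟨w⟩ := hT.preconnected ⟨x, hx⟩ ⟨y, hy⟩
  let w' := w.map (Embedding.induce T).toHom
  have hw' : ∀ u ∈ w'.support, u ∈ T := by
    simp only [w', Walk.support_map, List.mem_map]
    rintro _ ⟨v, -, rfl⟩
    exact v.2
  exact ⟨w'.bypass, w'.bypass_isPath, fun u hu => hw' u (w'.support_bypass_subset_support hu)⟩

lemma IsAcyclic.inter_inter_nonempty (hG : G.IsAcyclic) {S T U : Set V}
    (hS : (G.induce S).Connected) (hT : (G.induce T).Connected) (hU : (G.induce U).Connected)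
    (hST : (S ∩ T).Nonempty) (hTU : (T ∩ U).Nonempty) (hSU : (S ∩ U).Nonempty) :
    (S ∩ T ∩ U).Nonempty := by
  obtain ⟨x, hxS, hxU⟩ := hSU
  obtain ⟨y, hyS, hyT⟩ := hST
  obtain ⟨z, hzT, hzU⟩ := hTU
  obtain ⟨p, hp, hpS⟩ := hS.exists_isPath_of_induce hxS hyS
  obtain ⟨q, hq, hqT⟩ := hT.exists_isPath_of_induce hyT hzT
  obtain ⟨s, hs, hsU⟩ := hU.exists_isPath_of_induce hxU hzU
  obtain ⟨m, hmp, hmq, hms⟩ := hG.exists_mem_support_of_isPath hp hq hs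
  exact ⟨m, ⟨hpS m hmp, hqT m hmq⟩, hsU m hms⟩

end SimpleGraph

namespace TreeDecomp

variable {C R A : Type} {I : Interp C R A} {ℓ k : ℕ}

lemma exists_bag_of_triangle (td : TreeDecomp I ℓ k) {r₁ r₂ r₃ : R} {a b c : A}
    (hab : I.rn r₁ a b) (hbc : I.rn r₂ b c) (hca : I.rn r₃ c a) :
    ∃ v, a ∈ td.bag v ∧ b ∈ td.bag v ∧ c ∈ td.bag v := by
  have hcover : ∀ {x y : A} {r : R}, I.rn r x y →
      (td.G.induce {v | x ∈ td.bag v}).Connected :=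
    fun hxy => td.cover _ (Or.inr (Or.inl ⟨_, _, hxy⟩))
  obtain ⟨v, ⟨ha, hb⟩, hc⟩ := td.acyc.inter_inter_nonempty (hcover hab) (hcover hbc)
    (hcover hca) (td.edges _ _ _ hab) (td.edges _ _ _ hbc) (by
      obtain ⟨v, hc, ha⟩ := td.edges _ _ _ hca
      exact ⟨v, ha, hc⟩)
  exact ⟨v, ha, hb, hc⟩

end TreeDecomp

lemma HasTW.not_triangle {C R A : Type} {I : Interp C R A} {ℓ : ℕ} (htw : HasTW I ℓ 2)
    {r₁ r₂ r₃ : R} {a b c : A} (hab : a ≠ b) (hbc : b ≠ c) (hac : a ≠ c)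
    (eab : I.rn r₁ a b) (ebc : I.rn r₂ b c) (eca : I.rn r₃ c a) : False := by
  obtain ⟨td⟩ := htw
  obtain ⟨v, ha, hb, hc⟩ := td.exists_bag_of_triangle eab ebc eca
  have hsub : ({a, b, c} : Set A) ⊆ td.bag v := by
    rintro u (rfl | rfl | rfl) <;> assumption
  have hcard : ({a, b, c} : Set A).ncard = 3 := by
    rw [Set.ncard_insert_of_notMem (by simp [hab, hac]),
      Set.ncard_insert_of_notMem (by simp [hbc]), Set.ncard_singleton]
  have := (Set.ncard_le_ncard hsub (td.bagFin v)).trans (td.bagCard v)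
  omega

section CycleDB

variable {C R : Type} {nA : Fin 3 → C} {nB : C} {r : R}

lemma Hom.exists_lt_toFun_eq_of_hasTW {B : Type} {D' : Interp C R B} {ℓ : ℕ}
    (htw : HasTW D' ℓ 2) (f : Hom (cycleDB nA r) D') :
    ∃ i j : Fin 3, i < j ∧ f.toFun i = f.toFun j := by
  have hedge : ∀ i : Fin 3, D'.rn r (f.toFun i) (f.toFun (i + 1)) :=
    fun i => f.map_rn r _ _ ⟨rfl, rfl⟩
  by_contra! hinj
  exact htw.not_triangle (hinj 0 1 (by decide)) (hinj 1 2 (by decide)) (hinj 0 2 (by decide))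
    (hedge 0) (hedge 1) (hedge 2)

lemma ModelsELIUOnt.cn_of_cycleOnt {Δ : Type} {I : Interp C R Δ}
    (hI : ModelsELIUOnt I (cycleOnt nA nB)) {i j : Fin 3} (hij : i < j) {x : Δ}
    (hi : I.cn (nA i) x) (hj : I.cn (nA j) x) : I.cn nB x :=
  hI _ ⟨i, j, hij, rfl⟩ x ⟨hi, hj⟩

lemma existsB_eval_iff {Δ : Type} {I : Interp C R Δ} {v : Fin 0 → Δ} :
    (existsB (R := R) nB).Eval I v ↔ ∃ x, I.cn nB x := by
  constructor
  · rintro ⟨_, -, hcn, -⟩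
    exact ⟨_, hcn _ rfl⟩
  · rintro ⟨x, hx⟩
    refine ⟨fun _ => x, fun i => i.elim0, ?_, fun _ h => h.elim⟩
    rintro _ rfl
    exact hx

lemma cycleDB_modelsELIUOnt_cycleOnt (hinj : Function.Injective nA) :
    ModelsELIUOnt (cycleDB nA r) (cycleOnt nA nB) := by
  rintro _ ⟨i, j, hij, rfl⟩ a ⟨hi, hj⟩
  exact absurd (hinj (hi.trans hj.symm)) hij.ne

lemma cycleDB_not_cn (hB : ∀ i, nA i ≠ nB) (i : Fin 3) : ¬ (cycleDB nA r).cn nB i :=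
  fun h => hB i h.symm

end CycleDB

/-- for `O = {Aᵢ ⊓ Aⱼ ⊑ B : i < j}`, `q = ∃x B(x)` and the
3-cycle database `D`: (1) for every database `D'` of treewidth `(1,2)` to
which `D` maps homomorphically, `()` is a certain answer to `Q` on `D'` (so
`() ∈ app↑_{F₁}(Q,D)`); but (2) there is a model of `O` and `D` in which no
element satisfies `B` (so `()` is not a certain answer to `Q` on `D`). -/
theorem stmt19 {C R : Type} (nA : Fin 3 → C) (nB : C) (r : R)
    (hinj : Function.Injective nA) (hB : ∀ i, nA i ≠ nB) :
    (∀ (B : Type), Nonempty B → ∀ D' : Interp C R B, D'.FiniteFacts →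
      HasTW D' 1 2 → Nonempty (Hom (cycleDB nA r) D') →
      Certain (fun _ I => ModelsELIUOnt I (cycleOnt (R := R) nA nB)) D'
        (fun _ I v => (existsB (R := R) nB).Eval I v) (fun i => i.elim0)) ∧
    (∃ (Δ : Type) (_ : Nonempty Δ) (I : Interp C R Δ)
        (_ : Hom (cycleDB nA r) I),
      ModelsELIUOnt I (cycleOnt (R := R) nA nB) ∧ ∀ d, ¬ I.cn nB d) := by
  refine ⟨fun B _ D' _ htw ⟨f⟩ Δ _ I hI g => ?_, ?_⟩
  · obtain ⟨i, j, hij, hfij⟩ := f.exists_lt_toFun_eq_of_hasTW htw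
    have hi := g.map_cn _ _ (f.map_cn (nA i) i rfl)
    have hj := g.map_cn _ _ (f.map_cn (nA j) j rfl)
    rw [← hfij] at hj
    exact existsB_eval_iff.2 ⟨_, hI.cn_of_cycleOnt hij hi hj⟩
  · exact ⟨Fin 3, ⟨0⟩, cycleDB nA r, ⟨id, fun _ _ h => h, fun _ _ _ h => h⟩,
      cycleDB_modelsELIUOnt_cycleOnt hinj, cycleDB_not_cn hB⟩
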